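/- With the notation of the context, the identity v∘u − v′∘u′ = v′∘w − σ_P∘v′∘w∘σ_N holds as maps N₂(S) → P(S) for every finite set S if and only if all of the following hold: (a) α and ω commute with themselves and each other, i.e., for disjoint data in a finite set S: α^{S∖k}_{i,A}∘α^{S∖A}_{k,C} = α^{S∖i}_{k,C}∘α^{S∖C}_{i,A} whenever i ≠ k, A∩C = ∅, i ∉ A∪C, k ∉ A∪C; α^S_{i,A}∘ω^{S∖A}_C = ω^{S∖i}_C∘α^{S∖C}_{i,A} whenever A∩C = ∅ and i ∉ A∪C; and ω^T_C∘ω^{T∖C}_D = ω^T_D∘ω^{T∖D}_C for disjoint C,D ⊆ T; (b) for disjoint subsets A,B ⊆ S, j ∈ B and i ∈ S∖(A∪B): α^{S∖i}_{j,A}∘α^{S∖A}_{i,B} = α^{S∖j}_{i,(A∪B)∖j}; (c) for disjoint subsets A,B ⊆ S and j ∈ B: α^S_{j,A}∘ω^{S∖A}_B = ω^{S∖j}_{(A∪B)∖j}. (This characterizes when the data (α, ω) defines a representation of the curried Witt algebra on the standard FB-module.) -/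

import Mathlib

/-- An FB-module over `k`: a functor from the groupoid of finite sets (modelled as finite
subsets of `ℕ`) and bijections to `k`-modules.  A bijection `S → T` is encoded by a
function `f : ℕ → ℕ` that is injective on `S` with `S.image f = T`; the functor only
depends on the restriction of `f` to `S` (`map_congr`). -/
structure FBModule (k : Type) [CommRing k] where
  M : Finset ℕ → Type
  [acg : ∀ S, AddCommGroup (M S)]
  [mod : ∀ S, Module k (M S)]
  map : ∀ (f : ℕ → ℕ) (S T : Finset ℕ), Set.InjOn f S → S.image f = T → (M S →ₗ[k] M T)
  map_id : ∀ (S : Finset ℕ) (h1 : Set.InjOn id (S : Set ℕ)) (h2 : S.image id = S),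
    map id S S h1 h2 = LinearMap.id
  map_comp : ∀ (f g : ℕ → ℕ) (S T U : Finset ℕ) (h1 : Set.InjOn f S) (h2 : S.image f = T)
    (h3 : Set.InjOn g T) (h4 : T.image g = U) (h5 : Set.InjOn (g ∘ f) S)
    (h6 : S.image (g ∘ f) = U),
    map g T U h3 h4 ∘ₗ map f S T h1 h2 = map (g ∘ f) S U h5 h6
  map_congr : ∀ (f g : ℕ → ℕ) (S T : Finset ℕ) (h : ∀ x ∈ S, f x = g x)
    (h1 : Set.InjOn f S) (h2 : S.image f = T) (h3 : Set.InjOn g S) (h4 : S.image g = T),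
    map f S T h1 h2 = map g S T h3 h4

attribute [instance] FBModule.acg FBModule.mod

variable {k : Type} [CommRing k]

/-- The canonical identification `M(s) ≅ M(t)` for equal finite sets `s = t` (the action
of the identity bijection). -/
def FBModule.cast (N : FBModule k) {s t : Finset ℕ} (h : s = t) : N.M s →ₗ[k] N.M t :=
  N.map id s t (Set.injOn_id _) (by rwa [Finset.image_id])


section Helpers

lemma sdiff_sdiff_union' (S A B : Finset ℕ) : (S \ A) \ B = S \ (A ∪ B) := by
  ext x
  simp only [Finset.mem_sdiff, Finset.mem_union, not_or]
  tauto

lemma sdiff_sdiff_comm' (S A B : Finset ℕ) : (S \ A) \ B = (S \ B) \ A := by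
  ext x
  simp only [Finset.mem_sdiff]
  tauto

lemma sdiff_pair (S : Finset ℕ) (i j : ℕ) : S \ ({i, j} : Finset ℕ) = (S \ {i}) \ {j} := by
  ext x
  simp only [Finset.mem_sdiff, Finset.mem_insert, Finset.mem_singleton, not_or]
  tauto

lemma mem_sdiff_erase' (S B : Finset ℕ) (i : ℕ) (hiB : i ∈ B) :
    S \ B = (S \ {i}) \ (B \ {i}) := by
  ext x
  simp only [Finset.mem_sdiff, Finset.mem_singleton, not_and, not_not]
  constructor
  · rintro ⟨hx, hxB⟩
    exact ⟨⟨hx, fun h => hxB (h ▸ hiB)⟩, fun h => absurd h hxB⟩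
  · rintro ⟨⟨hx, hxi⟩, h⟩
    refine ⟨hx, fun hxB => hxi (h hxB)⟩

end Helpers

namespace Stmt16

variable {k : Type} [CommRing k] (N : FBModule k)

/-- Index set for `N₂(S)`: ordered pairs `(A, B)` of disjoint subsets of `S`. -/
def ιN2 (S : Finset ℕ) : Type :=
  {p : Finset ℕ × Finset ℕ // p.1 ⊆ S ∧ p.2 ⊆ S ∧ Disjoint p.1 p.2}

/-- Index set for `P₁(S)`: pairs `(A, i)` with `A ⊆ S`, `i ∈ S∖A`. -/
def ιP1 (S : Finset ℕ) : Type :=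
  {q : Finset ℕ × ℕ // q.1 ⊆ S ∧ q.2 ∈ S ∧ q.2 ∉ q.1}

/-- Index set for `P₁′(S)`: pairs `(j, B)` with `j ∈ S`, `B ⊆ S∖{j}`. -/
def ιP1' (S : Finset ℕ) : Type :=
  {q : ℕ × Finset ℕ // q.1 ∈ S ∧ q.2 ⊆ S ∧ q.1 ∉ q.2}

/-- Index set for `P(S)`: ordered pairs of distinct elements of `S`. -/
def ιP (S : Finset ℕ) : Type := {p : ℕ × ℕ // p.1 ∈ S ∧ p.2 ∈ S ∧ p.1 ≠ p.2}

instance (S : Finset ℕ) : DecidableEq (ιN2 S) := fun _ _ =>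
  decidable_of_iff _ Subtype.ext_iff.symm
instance (S : Finset ℕ) : DecidableEq (ιP1 S) := fun _ _ =>
  decidable_of_iff _ Subtype.ext_iff.symm
instance (S : Finset ℕ) : DecidableEq (ιP1' S) := fun _ _ =>
  decidable_of_iff _ Subtype.ext_iff.symm
instance (S : Finset ℕ) : DecidableEq (ιP S) := fun _ _ =>
  decidable_of_iff _ Subtype.ext_iff.symm

/-- `N₂(S) = ⊕_{(A,B)} M(S∖(A∪B))` over ordered pairs of disjoint subsets of `S`,
realizing `(Sym V ⊗ Sym V ⊗ M)(S)`. -/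
def N2 (S : Finset ℕ) : Type :=
  DirectSum (ιN2 S) (fun p => N.M (S \ (p.1.1 ∪ p.1.2)))

/-- `P₁(S) = ⊕_{(A,i)} M(S∖(A∪{i}))`, realizing `(Sym V ⊗ V ⊗ M)(S)`. -/
def P1 (S : Finset ℕ) : Type :=
  DirectSum (ιP1 S) (fun q => N.M (S \ (q.1.1 ∪ {q.1.2})))

/-- `P₁′(S) = ⊕_{(j,B)} M(S∖({j}∪B))`, realizing `(V ⊗ Sym V ⊗ M)(S)`. -/
def P1' (S : Finset ℕ) : Type :=
  DirectSum (ιP1' S) (fun q => N.M (S \ ({q.1.1} ∪ q.1.2)))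

/-- `P(S) = ⊕_{(i,j)} M(S∖{i,j})`, realizing `(V ⊗ V ⊗ M)(S)`. -/
def PP (S : Finset ℕ) : Type := DirectSum (ιP S) (fun p => N.M (S \ {p.1.1, p.1.2}))

instance (S : Finset ℕ) : AddCommGroup (N2 N S) := by unfold N2; infer_instance
instance (S : Finset ℕ) : Module k (N2 N S) := by unfold N2; infer_instance
instance (S : Finset ℕ) : AddCommGroup (P1 N S) := by unfold P1; infer_instance
instance (S : Finset ℕ) : Module k (P1 N S) := by unfold P1; infer_instance
instance (S : Finset ℕ) : AddCommGroup (P1' N S) := by unfold P1'; infer_instance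
instance (S : Finset ℕ) : Module k (P1' N S) := by unfold P1'; infer_instance
instance (S : Finset ℕ) : AddCommGroup (PP N S) := by unfold PP; infer_instance
instance (S : Finset ℕ) : Module k (PP N S) := by unfold PP; infer_instance

variable (φ : ∀ (S : Finset ℕ) (i : ℕ) (B : Finset ℕ), i ∈ S → B ⊆ S →
  (N.M (S \ B) →ₗ[k] N.M (S \ {i})))

/-- `u : N₂(S) → P₁(S)` with `(A,B) → (A,i)`-component `φ^{S∖A}_{i,B}`. -/
noncomputable def uMap (S : Finset ℕ) : N2 N S →ₗ[k] P1 N S :=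
  DirectSum.toModule k (ιN2 S) (P1 N S) (fun p =>
    ∑ i ∈ (S \ p.1.1).attach,
      (DirectSum.lof k (ιP1 S) (fun q => N.M (S \ (q.1.1 ∪ {q.1.2})))
          ⟨(p.1.1, i.1),
            ⟨p.2.1, (Finset.mem_sdiff.mp i.2).1, (Finset.mem_sdiff.mp i.2).2⟩⟩) ∘ₗ
        N.cast (sdiff_sdiff_union' S p.1.1 {i.1}) ∘ₗ
        φ (S \ p.1.1) i.1 p.1.2 i.2
          (Finset.subset_sdiff.mpr ⟨p.2.2.1, p.2.2.2.symm⟩) ∘ₗ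
        N.cast (sdiff_sdiff_union' S p.1.1 p.1.2).symm)

/-- `v : P₁(S) → P(S)` with `(A,i) → (j,i)`-component `φ^{S∖i}_{j,A}`. -/
noncomputable def vMap (S : Finset ℕ) : P1 N S →ₗ[k] PP N S :=
  DirectSum.toModule k (ιP1 S) (PP N S) (fun q =>
    ∑ j ∈ (S \ {q.1.2}).attach,
      (DirectSum.lof k (ιP S) (fun p => N.M (S \ {p.1.1, p.1.2}))
          ⟨(j.1, q.1.2),
            ⟨(Finset.mem_sdiff.mp j.2).1, q.2.2.1,
              fun h => (Finset.mem_sdiff.mp j.2).2 (Finset.mem_singleton.mpr h)⟩⟩) ∘ₗ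
        N.cast ((sdiff_sdiff_comm' S {q.1.2} {j.1}).trans (sdiff_pair S j.1 q.1.2).symm) ∘ₗ
        φ (S \ {q.1.2}) j.1 q.1.1 j.2
          (Finset.subset_sdiff.mpr
            ⟨q.2.1, Finset.disjoint_singleton_right.mpr q.2.2.2⟩) ∘ₗ
        N.cast (show S \ (q.1.1 ∪ {q.1.2}) = (S \ {q.1.2}) \ q.1.1 by
          rw [sdiff_sdiff_union', Finset.union_comm]))

/-- `u′ : N₂(S) → P₁′(S)` with `(A,B) → (j,B)`-component `φ^{S∖B}_{j,A}`. -/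
noncomputable def u'Map (S : Finset ℕ) : N2 N S →ₗ[k] P1' N S :=
  DirectSum.toModule k (ιN2 S) (P1' N S) (fun p =>
    ∑ j ∈ (S \ p.1.2).attach,
      (DirectSum.lof k (ιP1' S) (fun q => N.M (S \ ({q.1.1} ∪ q.1.2)))
          ⟨(j.1, p.1.2),
            ⟨(Finset.mem_sdiff.mp j.2).1, p.2.2.1, (Finset.mem_sdiff.mp j.2).2⟩⟩) ∘ₗ
        N.cast ((sdiff_sdiff_comm' S p.1.2 {j.1}).trans
          (sdiff_sdiff_union' S {j.1} p.1.2)) ∘ₗ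
        φ (S \ p.1.2) j.1 p.1.1 j.2
          (Finset.subset_sdiff.mpr ⟨p.2.1, p.2.2.2⟩) ∘ₗ
        N.cast (show S \ (p.1.1 ∪ p.1.2) = (S \ p.1.2) \ p.1.1 by
          rw [sdiff_sdiff_union', Finset.union_comm]))

/-- `v′ : P₁′(S) → P(S)` with `(j,B) → (j,i)`-component `φ^{S∖j}_{i,B}`. -/
noncomputable def v'Map (S : Finset ℕ) : P1' N S →ₗ[k] PP N S :=
  DirectSum.toModule k (ιP1' S) (PP N S) (fun q =>
    ∑ i ∈ (S \ {q.1.1}).attach,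
      (DirectSum.lof k (ιP S) (fun p => N.M (S \ {p.1.1, p.1.2}))
          ⟨(q.1.1, i.1),
            ⟨q.2.1, (Finset.mem_sdiff.mp i.2).1,
              fun h => (Finset.mem_sdiff.mp i.2).2
                (Finset.mem_singleton.mpr h.symm)⟩⟩) ∘ₗ
        N.cast (sdiff_pair S q.1.1 i.1).symm ∘ₗ
        φ (S \ {q.1.1}) i.1 q.1.2 i.2
          (Finset.subset_sdiff.mpr
            ⟨q.2.2.1, Finset.disjoint_singleton_right.mpr q.2.2.2⟩) ∘ₗ
        N.cast (sdiff_sdiff_union' S {q.1.1} q.1.2).symm)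

/-- `w : N₂(S) → P₁′(S)` with `(A,B) → (j, (A∪B)∖{j})`-component the canonical
identification of `M(S∖(A∪B))`, for each `j ∈ B`. -/
noncomputable def wMap (S : Finset ℕ) : N2 N S →ₗ[k] P1' N S :=
  DirectSum.toModule k (ιN2 S) (P1' N S) (fun p =>
    ∑ j ∈ p.1.2.attach,
      (DirectSum.lof k (ιP1' S) (fun q => N.M (S \ ({q.1.1} ∪ q.1.2)))
          ⟨(j.1, (p.1.1 ∪ p.1.2) \ {j.1}),
            ⟨p.2.2.1 j.2,
              Finset.sdiff_subset.trans (Finset.union_subset p.2.1 p.2.2.1),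
              by simp⟩⟩) ∘ₗ
        N.cast (show S \ (p.1.1 ∪ p.1.2) =
            S \ ({j.1} ∪ ((p.1.1 ∪ p.1.2) \ {j.1})) by
          ext x
          have hx : x = j.1 → x ∈ p.1.2 := fun h => h ▸ j.2
          simp only [Finset.mem_sdiff, Finset.mem_union, Finset.mem_singleton, not_or,
            not_and, not_not]
          tauto))

/-- `σ_N : N₂(S) → N₂(S)` carries the `(A,B)`-component identically to the
`(B,A)`-component. -/
noncomputable def σN (S : Finset ℕ) : N2 N S →ₗ[k] N2 N S :=
  DirectSum.toModule k (ιN2 S) (N2 N S) (fun p =>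
    (DirectSum.lof k (ιN2 S) (fun q => N.M (S \ (q.1.1 ∪ q.1.2)))
        ⟨(p.1.2, p.1.1), ⟨p.2.2.1, p.2.1, p.2.2.2.symm⟩⟩) ∘ₗ
      N.cast (by rw [Finset.union_comm]))

/-- `σ_P : P(S) → P(S)` carries the `(i,j)`-component identically to the
`(j,i)`-component. -/
noncomputable def σP (S : Finset ℕ) : PP N S →ₗ[k] PP N S :=
  DirectSum.toModule k (ιP S) (PP N S) (fun p =>
    (DirectSum.lof k (ιP S) (fun q => N.M (S \ {q.1.1, q.1.2}))
        ⟨(p.1.2, p.1.1), ⟨p.2.2.1, p.2.1, p.2.2.2.symm⟩⟩) ∘ₗ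
      N.cast (by rw [Finset.pair_comm]))

end Stmt16

namespace Stmt16

variable {k : Type} [CommRing k] (N : FBModule k)

/-- Condition (a), first part: `α` commutes with itself. -/
def CondA1 (α : ∀ (S : Finset ℕ) (i : ℕ) (A : Finset ℕ), i ∈ S → A ⊆ S → i ∉ A →
    (N.M (S \ A) →ₗ[k] N.M (S \ {i}))) : Prop :=
  ∀ (S : Finset ℕ) (i kk : ℕ) (A C : Finset ℕ) (hi : i ∈ S) (hk : kk ∈ S)
    (hik : i ≠ kk) (hA : A ⊆ S) (hC : C ⊆ S) (hAC : Disjoint A C)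
    (hiA : i ∉ A) (hiC : i ∉ C) (hkA : kk ∉ A) (hkC : kk ∉ C),
    α (S \ {kk}) i A (Finset.mem_sdiff.mpr ⟨hi, by simp [hik]⟩)
        (Finset.subset_sdiff.mpr ⟨hA, Finset.disjoint_singleton_right.mpr hkA⟩) hiA ∘ₗ
      N.cast (sdiff_sdiff_comm' S A {kk}) ∘ₗ
      α (S \ A) kk C (Finset.mem_sdiff.mpr ⟨hk, hkA⟩)
        (Finset.subset_sdiff.mpr ⟨hC, hAC.symm⟩) hkC =
    N.cast (sdiff_sdiff_comm' S {i} {kk}) ∘ₗ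
      α (S \ {i}) kk C (Finset.mem_sdiff.mpr ⟨hk, by simp [hik.symm]⟩)
        (Finset.subset_sdiff.mpr ⟨hC, Finset.disjoint_singleton_right.mpr hiC⟩) hkC ∘ₗ
      N.cast (sdiff_sdiff_comm' S C {i}) ∘ₗ
      α (S \ C) i A (Finset.mem_sdiff.mpr ⟨hi, hiC⟩)
        (Finset.subset_sdiff.mpr ⟨hA, hAC⟩) hiA ∘ₗ
      N.cast (sdiff_sdiff_comm' S A C)

/-- Condition (a), second part: `α` and `ω` commute. -/
def CondA2 (α : ∀ (S : Finset ℕ) (i : ℕ) (A : Finset ℕ), i ∈ S → A ⊆ S → i ∉ A →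
      (N.M (S \ A) →ₗ[k] N.M (S \ {i})))
    (ω : ∀ (T C : Finset ℕ), C ⊆ T → (N.M (T \ C) →ₗ[k] N.M T)) : Prop :=
  ∀ (S : Finset ℕ) (i : ℕ) (A C : Finset ℕ) (hi : i ∈ S) (hA : A ⊆ S) (hC : C ⊆ S)
    (hAC : Disjoint A C) (hiA : i ∉ A) (hiC : i ∉ C),
    α S i A hi hA hiA ∘ₗ
      ω (S \ A) C (Finset.subset_sdiff.mpr ⟨hC, hAC.symm⟩) =
    ω (S \ {i}) C (Finset.subset_sdiff.mpr ⟨hC, Finset.disjoint_singleton_right.mpr hiC⟩) ∘ₗ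
      N.cast (sdiff_sdiff_comm' S C {i}) ∘ₗ
      α (S \ C) i A (Finset.mem_sdiff.mpr ⟨hi, hiC⟩)
        (Finset.subset_sdiff.mpr ⟨hA, hAC⟩) hiA ∘ₗ
      N.cast (sdiff_sdiff_comm' S A C)

/-- Condition (a), third part: `ω` commutes with itself. -/
def CondA3 (ω : ∀ (T C : Finset ℕ), C ⊆ T → (N.M (T \ C) →ₗ[k] N.M T)) : Prop :=
  ∀ (T C D : Finset ℕ) (hC : C ⊆ T) (hD : D ⊆ T) (hCD : Disjoint C D),
    ω T C hC ∘ₗ ω (T \ C) D (Finset.subset_sdiff.mpr ⟨hD, hCD.symm⟩) =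
    ω T D hD ∘ₗ ω (T \ D) C (Finset.subset_sdiff.mpr ⟨hC, hCD⟩) ∘ₗ
      N.cast (sdiff_sdiff_comm' T C D)

/-- Condition (b): `α^{S∖i}_{j,A} ∘ α^{S∖A}_{i,B} = α^{S∖j}_{i,(A∪B)∖j}` for disjoint
`A, B ⊆ S`, `j ∈ B` and `i ∈ S∖(A∪B)`. -/
def CondBc (α : ∀ (S : Finset ℕ) (i : ℕ) (A : Finset ℕ), i ∈ S → A ⊆ S → i ∉ A →
    (N.M (S \ A) →ₗ[k] N.M (S \ {i}))) : Prop :=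
  ∀ (S : Finset ℕ) (A B : Finset ℕ) (j i : ℕ) (hA : A ⊆ S) (hB : B ⊆ S)
    (hAB : Disjoint A B) (hjB : j ∈ B) (hiS : i ∈ S) (hiA : i ∉ A) (hiB : i ∉ B),
    α (S \ {i}) j A
        (Finset.mem_sdiff.mpr ⟨hB hjB,
          Finset.notMem_singleton.mpr (fun h => hiB (by rw [← h]; exact hjB))⟩)
        (Finset.subset_sdiff.mpr ⟨hA, Finset.disjoint_singleton_right.mpr hiA⟩)
        (Finset.disjoint_right.mp hAB hjB) ∘ₗ
      N.cast (sdiff_sdiff_comm' S A {i}) ∘ₗ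
      α (S \ A) i B (Finset.mem_sdiff.mpr ⟨hiS, hiA⟩)
        (Finset.subset_sdiff.mpr ⟨hB, hAB.symm⟩) hiB =
    N.cast (sdiff_sdiff_comm' S {j} {i}) ∘ₗ
      α (S \ {j}) i ((A ∪ B) \ {j})
        (Finset.mem_sdiff.mpr ⟨hiS,
          Finset.notMem_singleton.mpr (fun h => hiB (by rw [h]; exact hjB))⟩)
        (Finset.sdiff_subset_sdiff (Finset.union_subset hA hB) (Finset.Subset.refl _))
        (by simp [hiA, hiB]) ∘ₗ
      N.cast ((sdiff_sdiff_union' S A B).trans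
        (mem_sdiff_erase' S (A ∪ B) j (Finset.mem_union_right A hjB)))

/-- Condition (c): `α^S_{j,A} ∘ ω^{S∖A}_B = ω^{S∖j}_{(A∪B)∖j}` for disjoint `A, B ⊆ S`
and `j ∈ B`. -/
def CondCc (α : ∀ (S : Finset ℕ) (i : ℕ) (A : Finset ℕ), i ∈ S → A ⊆ S → i ∉ A →
      (N.M (S \ A) →ₗ[k] N.M (S \ {i})))
    (ω : ∀ (T C : Finset ℕ), C ⊆ T → (N.M (T \ C) →ₗ[k] N.M T)) : Prop :=
  ∀ (S : Finset ℕ) (A B : Finset ℕ) (j : ℕ) (hA : A ⊆ S) (hB : B ⊆ S)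
    (hAB : Disjoint A B) (hjB : j ∈ B),
    α S j A (hB hjB) hA (Finset.disjoint_right.mp hAB hjB) ∘ₗ
      ω (S \ A) B (Finset.subset_sdiff.mpr ⟨hB, hAB.symm⟩) =
    ω (S \ {j}) ((A ∪ B) \ {j})
        (Finset.sdiff_subset_sdiff (Finset.union_subset hA hB) (Finset.Subset.refl _)) ∘ₗ
      N.cast ((sdiff_sdiff_union' S A B).trans
        (mem_sdiff_erase' S (A ∪ B) j (Finset.mem_union_right A hjB)))


/-!
Both sides of the identity are computed entry by entry. On the summand `M(S∖(A∪B))` of `N₂(S)`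
the `(j,i)`-entry of `v∘u` is `φ^{S∖i}_{j,A} φ^{S∖A}_{i,B}` (present iff `i ∉ A`), that of
`v′∘u′` is `φ^{S∖j}_{i,B} φ^{S∖B}_{j,A}` (iff `j ∉ B`), that of `v′∘w` is
`φ^{S∖j}_{i,(A∪B)∖j}` (iff `j ∈ B`), and `σ_P∘v′∘w∘σ_N` contributes the same entry with the
roles of `(A,j)` and `(B,i)` exchanged (iff `i ∈ A`). Splitting according to whether `i` and `j`
lie in `A`, in `B` or in neither, and unfolding `φ` into `α` or `ω`, each of the nine cases of the
entrywise identity is exactly one instance of one of the conditions, except the case `i ∈ A`,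
`j ∈ B`, where both sides are the same `ω`. Conversely every instance of a condition occurs
among these entries, once one or two points outside `S` are adjoined to serve as the indices that
`φ` absorbs into `ω`.
-/

lemma _root_.FBModule.cast_self {s : Finset ℕ} (h : s = s) : N.cast h = LinearMap.id :=
  N.map_id s _ _

lemma _root_.FBModule.cast_cast_apply {s t u : Finset ℕ} (h : s = t) (h' : t = u) (x : N.M s) :
    N.cast h' (N.cast h x) = N.cast (h.trans h') x := by
  subst h h'
  simp only [N.cast_self, LinearMap.id_apply]

lemma _root_.FBModule.cast_apply_heq {s t : Finset ℕ} (h : s = t) (x : N.M s) :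
    N.cast h x ≍ x := by
  subst h
  rw [N.cast_self]
  rfl

lemma _root_.FBModule.cast_apply_heq_iff {s t u : Finset ℕ} (h : s = t) (x : N.M s)
    (y : N.M u) : N.cast h x ≍ y ↔ x ≍ y :=
  ⟨(N.cast_apply_heq h x).symm.trans, (N.cast_apply_heq h x).trans⟩

lemma _root_.FBModule.heq_cast_apply_iff {s t u : Finset ℕ} (h : s = t) (x : N.M s)
    (y : N.M u) : y ≍ N.cast h x ↔ y ≍ x :=
  ⟨fun h' => h'.trans (N.cast_apply_heq h x), fun h' => h'.trans (N.cast_apply_heq h x).symm⟩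

lemma _root_.FBModule.linearMap_eq_iff_of_heq {s t s' t' : Finset ℕ} (hs : s = s')
    (ht : t = t') {f g : N.M s →ₗ[k] N.M t} {f' g' : N.M s' →ₗ[k] N.M t'}
    (hf : ∀ x, f x ≍ f' (N.cast hs x)) (hg : ∀ x, g x ≍ g' (N.cast hs x)) :
    f = g ↔ f' = g' := by
  subst hs ht
  simp only [N.cast_self, LinearMap.id_apply, heq_iff_eq] at hf hg
  rw [LinearMap.ext hf, LinearMap.ext hg]

lemma alpha_heq (α : ∀ (S : Finset ℕ) (i : ℕ) (A : Finset ℕ), i ∈ S → A ⊆ S → i ∉ A →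
      (N.M (S \ A) →ₗ[k] N.M (S \ {i})))
    {S S' A A' : Finset ℕ} {i : ℕ} (hS : S = S') (hA : A = A')
    {p₁ : i ∈ S} {p₂ : A ⊆ S} {p₃ : i ∉ A} {q₁ : i ∈ S'} {q₂ : A' ⊆ S'} {q₃ : i ∉ A'}
    {x : N.M (S \ A)} {x' : N.M (S' \ A')} (hx : x ≍ x') :
    α S i A p₁ p₂ p₃ x ≍ α S' i A' q₁ q₂ q₃ x' := by
  subst hS hA
  rw [eq_of_heq hx]

lemma omega_heq (ω : ∀ (T C : Finset ℕ), C ⊆ T → (N.M (T \ C) →ₗ[k] N.M T))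
    {T T' C C' : Finset ℕ} (hT : T = T') (hC : C = C') {p : C ⊆ T} {q : C' ⊆ T'}
    {x : N.M (T \ C)} {x' : N.M (T' \ C')} (hx : x ≍ x') :
    ω T C p x ≍ ω T' C' q x' := by
  subst hT hC
  rw [eq_of_heq hx]

section DirectSum

variable {R : Type*} [Semiring R] {ι κ : Type*} [DecidableEq ι]
  {M : ι → Type*} [∀ i, AddCommMonoid (M i)] [∀ i, Module R (M i)]
  {P : κ → Type*} [∀ i, AddCommMonoid (P i)] [∀ i, Module R (P i)]

lemma _root_.DirectSum.toModule_sum_lof_apply [DecidableEq κ] {α : ι → Type*}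
    (s : ∀ i, Finset (α i)) (key : ∀ i, α i → κ) (F : ∀ i a, M i →ₗ[R] P (key i a)) (i : ι)
    (x : M i) :
    DirectSum.toModule R ι (DirectSum κ P)
        (fun i => ∑ a ∈ s i, DirectSum.lof R κ P (key i a) ∘ₗ F i a)
        (DirectSum.lof R ι M i x) =
      ∑ a ∈ s i, DirectSum.lof R κ P (key i a) (F i a x) := by
  simp [DirectSum.toModule_lof]

lemma _root_.DirectSum.component_sum_lof_of_ne [DecidableEq κ] {α : Type*} (s : Finset α)
    (key : α → κ) (y : ∀ a, P (key a)) (j : κ) (h : ∀ a ∈ s, key a ≠ j) :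
    DirectSum.component R κ P j (∑ a ∈ s, DirectSum.lof R κ P (key a) (y a)) = 0 := by
  rw [map_sum]
  refine Finset.sum_eq_zero fun a ha => ?_
  rw [DirectSum.component.of, dif_neg (h a ha)]

lemma _root_.DirectSum.component_sum_lof_self [DecidableEq κ] {α : Type*} (s : Finset α)
    (key : α → κ) (y : ∀ a, P (key a)) {a₀ : α} (ha₀ : a₀ ∈ s)
    (h : ∀ a ∈ s, a ≠ a₀ → key a ≠ key a₀) :
    DirectSum.component R κ P (key a₀) (∑ a ∈ s, DirectSum.lof R κ P (key a) (y a)) =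
      y a₀ := by
  rw [map_sum, Finset.sum_eq_single_of_mem a₀ ha₀ fun a ha hne => ?_,
    DirectSum.component.lof_self]
  rw [DirectSum.component.of, dif_neg (h a ha hne)]

lemma _root_.DirectSum.linearMap_eq_iff_component (f g : DirectSum ι M →ₗ[R] DirectSum κ P) :
    f = g ↔ ∀ i j (x : M i), DirectSum.component R κ P j (f (DirectSum.lof R ι M i x)) =
      DirectSum.component R κ P j (g (DirectSum.lof R ι M i x)) :=
  ⟨by rintro rfl; simp, fun h => DirectSum.linearMap_ext _ fun i =>
    LinearMap.ext fun x => DirectSum.ext_component R fun j => h i j x⟩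

end DirectSum

lemma ιP.eq_of_mk_eq_mk {S : Finset ℕ} {a b c d : ℕ} {h h'}
    (e : (⟨(a, b), h⟩ : ιP S) = ⟨(c, d), h'⟩) : a = c ∧ b = d :=
  Prod.ext_iff.mp (congrArg Subtype.val e)

lemma σN_lof (S A B : Finset ℕ) (hA : A ⊆ S) (hB : B ⊆ S) (hd : Disjoint A B)
    (x : N.M (S \ (A ∪ B))) :
    σN N S (DirectSum.lof k (ιN2 S) (fun p => N.M (S \ (p.1.1 ∪ p.1.2))) ⟨(A, B), hA, hB, hd⟩ x) =
      DirectSum.lof k (ιN2 S) (fun p => N.M (S \ (p.1.1 ∪ p.1.2))) ⟨(B, A), hB, hA, hd.symm⟩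
        (N.cast (by rw [Finset.union_comm]) x) := by
  erw [σN, DirectSum.toModule_lof]
  rfl

lemma component_comp_σP (S : Finset ℕ) (j i : ℕ) (hj : j ∈ S) (hi : i ∈ S) (hji : j ≠ i) :
    DirectSum.component k (ιP S) (fun r => N.M (S \ {r.1.1, r.1.2})) ⟨(j, i), hj, hi, hji⟩ ∘ₗ
      σP N S =
    N.cast (by rw [Finset.pair_comm]) ∘ₗ
      DirectSum.component k (ιP S) (fun r => N.M (S \ {r.1.1, r.1.2}))
        ⟨(i, j), hi, hj, hji.symm⟩ := by
  refine DirectSum.linearMap_ext _ fun q => LinearMap.ext fun z => ?_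
  erw [LinearMap.comp_apply, LinearMap.comp_apply, LinearMap.comp_apply, LinearMap.comp_apply,
    σP, DirectSum.toModule_lof, LinearMap.comp_apply, DirectSum.component.of,
    DirectSum.component.of]
  split_ifs with h₁ h₂ h₂
  · subst h₂
    rfl
  · obtain ⟨h₃, h₄⟩ := ιP.eq_of_mk_eq_mk h₁
    exact absurd (Subtype.ext (Prod.ext h₄ h₃)) h₂
  · subst h₂
    exact absurd rfl h₁
  · exact (map_zero _).symm

lemma component_σP_apply (S : Finset ℕ) (j i : ℕ) (hj : j ∈ S) (hi : i ∈ S) (hji : j ≠ i)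
    (y : PP N S) :
    DirectSum.component k (ιP S) (fun r => N.M (S \ {r.1.1, r.1.2})) ⟨(j, i), hj, hi, hji⟩
      (σP N S y) =
    N.cast (by rw [Finset.pair_comm])
      (DirectSum.component k (ιP S) (fun r => N.M (S \ {r.1.1, r.1.2})) ⟨(i, j), hi, hj, hji.symm⟩
        y) :=
  LinearMap.congr_fun (component_comp_σP N S j i hj hi hji) y

section Coefficients

variable (φ : ∀ (S : Finset ℕ) (i : ℕ) (B : Finset ℕ), i ∈ S → B ⊆ S →
  (N.M (S \ B) →ₗ[k] N.M (S \ {i})))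

noncomputable def vuCoeff (S A B : Finset ℕ) (j i : ℕ) (hj : j ∈ S \ {i}) (hA : A ⊆ S \ {i})
    (hi : i ∈ S \ A) (hB : B ⊆ S \ A) : N.M (S \ (A ∪ B)) →ₗ[k] N.M (S \ {j, i}) :=
  N.cast ((sdiff_sdiff_comm' S {i} {j}).trans (sdiff_pair S j i).symm) ∘ₗ
    φ (S \ {i}) j A hj hA ∘ₗ N.cast (sdiff_sdiff_comm' S A {i}) ∘ₗ
    φ (S \ A) i B hi hB ∘ₗ N.cast (sdiff_sdiff_union' S A B).symm

noncomputable def v'u'Coeff (S A B : Finset ℕ) (j i : ℕ) (hi : i ∈ S \ {j})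
    (hB : B ⊆ S \ {j}) (hj : j ∈ S \ B) (hA : A ⊆ S \ B) :
    N.M (S \ (A ∪ B)) →ₗ[k] N.M (S \ {j, i}) :=
  N.cast (sdiff_pair S j i).symm ∘ₗ φ (S \ {j}) i B hi hB ∘ₗ
    N.cast (sdiff_sdiff_comm' S B {j}) ∘ₗ φ (S \ B) j A hj hA ∘ₗ
    N.cast ((sdiff_sdiff_union' S A B).symm.trans (sdiff_sdiff_comm' S A B))

noncomputable def v'wCoeff (S A B : Finset ℕ) (j i : ℕ) (hi : i ∈ S \ {j})
    (hAB : (A ∪ B) \ {j} ⊆ S \ {j}) (hjB : j ∈ B) :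
    N.M (S \ (A ∪ B)) →ₗ[k] N.M (S \ {j, i}) :=
  N.cast (sdiff_pair S j i).symm ∘ₗ φ (S \ {j}) i ((A ∪ B) \ {j}) hi hAB ∘ₗ
    N.cast (mem_sdiff_erase' S (A ∪ B) j (Finset.mem_union_right A hjB))

variable (S A B : Finset ℕ) (hA : A ⊆ S) (hB : B ⊆ S) (hd : Disjoint A B)
  (j i : ℕ) (hj : j ∈ S) (hi : i ∈ S) (hji : j ≠ i)

lemma component_vMap_uMap (x : N.M (S \ (A ∪ B))) :
    DirectSum.component k (ιP S) (fun r => N.M (S \ {r.1.1, r.1.2})) ⟨(j, i), hj, hi, hji⟩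
      (vMap N φ S (uMap N φ S
        (DirectSum.lof k (ιN2 S) (fun p => N.M (S \ (p.1.1 ∪ p.1.2)))
          ⟨(A, B), hA, hB, hd⟩ x))) =
    if hiA : i ∈ A then 0 else
      vuCoeff N φ S A B j i (Finset.mem_sdiff.mpr ⟨hj, Finset.notMem_singleton.mpr hji⟩)
        (Finset.subset_sdiff.mpr ⟨hA, Finset.disjoint_singleton_right.mpr hiA⟩)
        (Finset.mem_sdiff.mpr ⟨hi, hiA⟩) (Finset.subset_sdiff.mpr ⟨hB, hd.symm⟩) x := by
  erw [uMap, DirectSum.toModule_sum_lof_apply, map_sum, map_sum]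
  split_ifs with hiA
  · refine Finset.sum_eq_zero fun c _ => ?_
    erw [vMap, DirectSum.toModule_sum_lof_apply, DirectSum.component_sum_lof_of_ne]
    rintro d - h
    obtain ⟨-, h₂⟩ := ιP.eq_of_mk_eq_mk h
    dsimp only at h₂
    exact (Finset.mem_sdiff.mp c.2).2 (h₂ ▸ hiA)
  · rw [Finset.sum_eq_single_of_mem ⟨i, Finset.mem_sdiff.mpr ⟨hi, hiA⟩⟩ (Finset.mem_attach _ _)]
    · erw [vMap, DirectSum.toModule_sum_lof_apply,
        DirectSum.component_sum_lof_self _ _ _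
          (a₀ := ⟨j, Finset.mem_sdiff.mpr ⟨hj, Finset.notMem_singleton.mpr hji⟩⟩)
          (Finset.mem_attach _ _)]
      · simp only [vuCoeff, LinearMap.comp_apply, N.cast_cast_apply]
      rintro d - hne h
      exact hne (Subtype.ext (ιP.eq_of_mk_eq_mk h).1)
    rintro c - hne
    erw [vMap, DirectSum.toModule_sum_lof_apply, DirectSum.component_sum_lof_of_ne]
    rintro d - h
    exact hne (Subtype.ext (ιP.eq_of_mk_eq_mk h).2)

lemma component_v'Map_u'Map (x : N.M (S \ (A ∪ B))) :
    DirectSum.component k (ιP S) (fun r => N.M (S \ {r.1.1, r.1.2})) ⟨(j, i), hj, hi, hji⟩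
      (v'Map N φ S (u'Map N φ S
        (DirectSum.lof k (ιN2 S) (fun p => N.M (S \ (p.1.1 ∪ p.1.2)))
          ⟨(A, B), hA, hB, hd⟩ x))) =
    if hjB : j ∈ B then 0 else
      v'u'Coeff N φ S A B j i (Finset.mem_sdiff.mpr ⟨hi, Finset.notMem_singleton.mpr hji.symm⟩)
        (Finset.subset_sdiff.mpr ⟨hB, Finset.disjoint_singleton_right.mpr hjB⟩)
        (Finset.mem_sdiff.mpr ⟨hj, hjB⟩) (Finset.subset_sdiff.mpr ⟨hA, hd⟩) x := by
  erw [u'Map, DirectSum.toModule_sum_lof_apply, map_sum, map_sum]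
  split_ifs with hjB
  · refine Finset.sum_eq_zero fun c _ => ?_
    erw [v'Map, DirectSum.toModule_sum_lof_apply, DirectSum.component_sum_lof_of_ne]
    rintro d - h
    obtain ⟨h₁, -⟩ := ιP.eq_of_mk_eq_mk h
    dsimp only at h₁
    exact (Finset.mem_sdiff.mp c.2).2 (h₁ ▸ hjB)
  · rw [Finset.sum_eq_single_of_mem ⟨j, Finset.mem_sdiff.mpr ⟨hj, hjB⟩⟩ (Finset.mem_attach _ _)]
    · erw [v'Map, DirectSum.toModule_sum_lof_apply,
        DirectSum.component_sum_lof_self _ _ _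
          (a₀ := ⟨i, Finset.mem_sdiff.mpr ⟨hi, Finset.notMem_singleton.mpr hji.symm⟩⟩)
          (Finset.mem_attach _ _)]
      · simp only [v'u'Coeff, LinearMap.comp_apply, N.cast_cast_apply]
      rintro d - hne h
      exact hne (Subtype.ext (ιP.eq_of_mk_eq_mk h).2)
    rintro c - hne
    erw [v'Map, DirectSum.toModule_sum_lof_apply, DirectSum.component_sum_lof_of_ne]
    rintro d - h
    exact hne (Subtype.ext (ιP.eq_of_mk_eq_mk h).1)

lemma component_v'Map_wMap (x : N.M (S \ (A ∪ B))) :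
    DirectSum.component k (ιP S) (fun r => N.M (S \ {r.1.1, r.1.2})) ⟨(j, i), hj, hi, hji⟩
      (v'Map N φ S (wMap N S
        (DirectSum.lof k (ιN2 S) (fun p => N.M (S \ (p.1.1 ∪ p.1.2)))
          ⟨(A, B), hA, hB, hd⟩ x))) =
    if hjB : j ∈ B then
      v'wCoeff N φ S A B j i (Finset.mem_sdiff.mpr ⟨hi, Finset.notMem_singleton.mpr hji.symm⟩)
        (Finset.sdiff_subset_sdiff (Finset.union_subset hA hB) subset_rfl) hjB x
    else 0 := by
  erw [wMap, DirectSum.toModule_sum_lof_apply, map_sum, map_sum]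
  split_ifs with hjB
  · rw [Finset.sum_eq_single_of_mem ⟨j, hjB⟩ (Finset.mem_attach _ _)]
    · erw [v'Map, DirectSum.toModule_sum_lof_apply,
        DirectSum.component_sum_lof_self _ _ _
          (a₀ := ⟨i, Finset.mem_sdiff.mpr ⟨hi, Finset.notMem_singleton.mpr hji.symm⟩⟩)
          (Finset.mem_attach _ _)]
      · simp only [v'wCoeff, LinearMap.comp_apply, N.cast_cast_apply]
      rintro d - hne h
      exact hne (Subtype.ext (ιP.eq_of_mk_eq_mk h).2)
    rintro c - hne
    erw [v'Map, DirectSum.toModule_sum_lof_apply, DirectSum.component_sum_lof_of_ne]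
    rintro d - h
    exact hne (Subtype.ext (ιP.eq_of_mk_eq_mk h).1)
  · refine Finset.sum_eq_zero fun c _ => ?_
    erw [v'Map, DirectSum.toModule_sum_lof_apply, DirectSum.component_sum_lof_of_ne]
    rintro d - h
    obtain ⟨h₁, -⟩ := ιP.eq_of_mk_eq_mk h
    dsimp only at h₁
    exact hjB (h₁ ▸ c.2)

noncomputable def lhsCoeff : N.M (S \ (A ∪ B)) →ₗ[k] N.M (S \ {j, i}) :=
  (if hiA : i ∈ A then 0 else
    vuCoeff N φ S A B j i (Finset.mem_sdiff.mpr ⟨hj, Finset.notMem_singleton.mpr hji⟩)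
      (Finset.subset_sdiff.mpr ⟨hA, Finset.disjoint_singleton_right.mpr hiA⟩)
      (Finset.mem_sdiff.mpr ⟨hi, hiA⟩) (Finset.subset_sdiff.mpr ⟨hB, hd.symm⟩)) -
  (if hjB : j ∈ B then 0 else
    v'u'Coeff N φ S A B j i (Finset.mem_sdiff.mpr ⟨hi, Finset.notMem_singleton.mpr hji.symm⟩)
      (Finset.subset_sdiff.mpr ⟨hB, Finset.disjoint_singleton_right.mpr hjB⟩)
      (Finset.mem_sdiff.mpr ⟨hj, hjB⟩) (Finset.subset_sdiff.mpr ⟨hA, hd⟩))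

noncomputable def rhsCoeff : N.M (S \ (A ∪ B)) →ₗ[k] N.M (S \ {j, i}) :=
  (if hjB : j ∈ B then
    v'wCoeff N φ S A B j i (Finset.mem_sdiff.mpr ⟨hi, Finset.notMem_singleton.mpr hji.symm⟩)
      (Finset.sdiff_subset_sdiff (Finset.union_subset hA hB) subset_rfl) hjB
  else 0) -
  (if hiA : i ∈ A then
    N.cast (by rw [Finset.pair_comm]) ∘ₗ
      v'wCoeff N φ S B A i j (Finset.mem_sdiff.mpr ⟨hj, Finset.notMem_singleton.mpr hji⟩)
        (Finset.sdiff_subset_sdiff (Finset.union_subset hB hA) subset_rfl) hiA ∘ₗ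
      N.cast (by rw [Finset.union_comm])
  else 0)

lemma component_lhs (x : N.M (S \ (A ∪ B))) :
    DirectSum.component k (ιP S) (fun r => N.M (S \ {r.1.1, r.1.2})) ⟨(j, i), hj, hi, hji⟩
      ((vMap N φ S ∘ₗ uMap N φ S - v'Map N φ S ∘ₗ u'Map N φ S)
        (DirectSum.lof k (ιN2 S) (fun p => N.M (S \ (p.1.1 ∪ p.1.2)))
          ⟨(A, B), hA, hB, hd⟩ x)) =
    lhsCoeff N φ S A B hA hB hd j i hj hi hji x := by
  erw [LinearMap.sub_apply, LinearMap.comp_apply, LinearMap.comp_apply, map_sub,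
    component_vMap_uMap N φ S A B hA hB hd j i hj hi hji,
    component_v'Map_u'Map N φ S A B hA hB hd j i hj hi hji]
  rw [lhsCoeff, LinearMap.sub_apply]
  split_ifs <;> rfl

lemma component_rhs (x : N.M (S \ (A ∪ B))) :
    DirectSum.component k (ιP S) (fun r => N.M (S \ {r.1.1, r.1.2})) ⟨(j, i), hj, hi, hji⟩
      ((v'Map N φ S ∘ₗ wMap N S - σP N S ∘ₗ v'Map N φ S ∘ₗ wMap N S ∘ₗ σN N S)
        (DirectSum.lof k (ιN2 S) (fun p => N.M (S \ (p.1.1 ∪ p.1.2)))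
          ⟨(A, B), hA, hB, hd⟩ x)) =
    rhsCoeff N φ S A B hA hB j i hj hi hji x := by
  erw [LinearMap.sub_apply, LinearMap.comp_apply, LinearMap.comp_apply, LinearMap.comp_apply,
    LinearMap.comp_apply, map_sub, component_σP_apply N S j i hj hi hji,
    σN_lof N S A B hA hB hd x, component_v'Map_wMap N φ S A B hA hB hd j i hj hi hji,
    component_v'Map_wMap N φ S B A hB hA hd.symm i j hi hj hji.symm]
  rw [rhsCoeff, LinearMap.sub_apply]
  split_ifs <;> simp only [LinearMap.comp_apply, LinearMap.zero_apply, map_zero]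

end Coefficients

section Identity

variable (φ : ∀ (S : Finset ℕ) (i : ℕ) (B : Finset ℕ), i ∈ S → B ⊆ S →
  (N.M (S \ B) →ₗ[k] N.M (S \ {i})))

def CoeffsAgree : Prop :=
  ∀ (S A B : Finset ℕ) (hA : A ⊆ S) (hB : B ⊆ S) (hd : Disjoint A B)
    (j i : ℕ) (hj : j ∈ S) (hi : i ∈ S) (hji : j ≠ i),
    lhsCoeff N φ S A B hA hB hd j i hj hi hji = rhsCoeff N φ S A B hA hB j i hj hi hji

lemma wittIdentity_iff_coeffsAgree :
    (∀ S : Finset ℕ, vMap N φ S ∘ₗ uMap N φ S - v'Map N φ S ∘ₗ u'Map N φ S =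
        v'Map N φ S ∘ₗ wMap N S - σP N S ∘ₗ v'Map N φ S ∘ₗ wMap N S ∘ₗ σN N S) ↔
      CoeffsAgree N φ := by
  refine forall_congr' fun S => (DirectSum.linearMap_eq_iff_component _ _).trans
    ⟨fun h A B hA hB hd j i hj hi hji => ?_,
      fun h ⟨⟨A, B⟩, hA, hB, hd⟩ ⟨⟨j, i⟩, hj, hi, hji⟩ x => ?_⟩
  · ext x
    rw [← component_lhs N φ S A B hA hB hd j i hj hi hji,
      ← component_rhs N φ S A B hA hB hd j i hj hi hji]
    exact h ⟨(A, B), hA, hB, hd⟩ ⟨(j, i), hj, hi, hji⟩ x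
  · erw [component_lhs N φ S A B hA hB hd j i hj hi hji x,
      component_rhs N φ S A B hA hB hd j i hj hi hji x, h]

end Identity

/- `CondA1 N α` unfolds to `∀ S i kk A C, CondA1At N α S i kk A C`, and likewise for the other
conditions. In the pointwise form the finite sets are plain arguments, so they can be rewritten
(as in `insert n S \ {n} = S`) independently of the membership proofs. -/
section Pointwise

variable (α : ∀ (S : Finset ℕ) (i : ℕ) (A : Finset ℕ), i ∈ S → A ⊆ S → i ∉ A →
      (N.M (S \ A) →ₗ[k] N.M (S \ {i})))
    (ω : ∀ (T C : Finset ℕ), C ⊆ T → (N.M (T \ C) →ₗ[k] N.M T))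

def CondA1At (S : Finset ℕ) (i kk : ℕ) (A C : Finset ℕ) : Prop :=
  ∀ (hi : i ∈ S) (hk : kk ∈ S) (hik : i ≠ kk) (hA : A ⊆ S) (hC : C ⊆ S) (hAC : Disjoint A C)
    (hiA : i ∉ A) (hiC : i ∉ C) (hkA : kk ∉ A) (hkC : kk ∉ C),
    α (S \ {kk}) i A (Finset.mem_sdiff.mpr ⟨hi, by simp [hik]⟩)
        (Finset.subset_sdiff.mpr ⟨hA, Finset.disjoint_singleton_right.mpr hkA⟩) hiA ∘ₗ
      N.cast (sdiff_sdiff_comm' S A {kk}) ∘ₗ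
      α (S \ A) kk C (Finset.mem_sdiff.mpr ⟨hk, hkA⟩)
        (Finset.subset_sdiff.mpr ⟨hC, hAC.symm⟩) hkC =
    N.cast (sdiff_sdiff_comm' S {i} {kk}) ∘ₗ
      α (S \ {i}) kk C (Finset.mem_sdiff.mpr ⟨hk, by simp [hik.symm]⟩)
        (Finset.subset_sdiff.mpr ⟨hC, Finset.disjoint_singleton_right.mpr hiC⟩) hkC ∘ₗ
      N.cast (sdiff_sdiff_comm' S C {i}) ∘ₗ
      α (S \ C) i A (Finset.mem_sdiff.mpr ⟨hi, hiC⟩)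
        (Finset.subset_sdiff.mpr ⟨hA, hAC⟩) hiA ∘ₗ
      N.cast (sdiff_sdiff_comm' S A C)

def CondA2At (S : Finset ℕ) (i : ℕ) (A C : Finset ℕ) : Prop :=
  ∀ (hi : i ∈ S) (hA : A ⊆ S) (hC : C ⊆ S) (hAC : Disjoint A C) (hiA : i ∉ A) (hiC : i ∉ C),
    α S i A hi hA hiA ∘ₗ
      ω (S \ A) C (Finset.subset_sdiff.mpr ⟨hC, hAC.symm⟩) =
    ω (S \ {i}) C (Finset.subset_sdiff.mpr ⟨hC, Finset.disjoint_singleton_right.mpr hiC⟩) ∘ₗ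
      N.cast (sdiff_sdiff_comm' S C {i}) ∘ₗ
      α (S \ C) i A (Finset.mem_sdiff.mpr ⟨hi, hiC⟩)
        (Finset.subset_sdiff.mpr ⟨hA, hAC⟩) hiA ∘ₗ
      N.cast (sdiff_sdiff_comm' S A C)

def CondA3At (T C D : Finset ℕ) : Prop :=
  ∀ (hC : C ⊆ T) (hD : D ⊆ T) (hCD : Disjoint C D),
    ω T C hC ∘ₗ ω (T \ C) D (Finset.subset_sdiff.mpr ⟨hD, hCD.symm⟩) =
    ω T D hD ∘ₗ ω (T \ D) C (Finset.subset_sdiff.mpr ⟨hC, hCD⟩) ∘ₗ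
      N.cast (sdiff_sdiff_comm' T C D)

def CondBcAt (S A B : Finset ℕ) (j i : ℕ) : Prop :=
  ∀ (hA : A ⊆ S) (hB : B ⊆ S) (hAB : Disjoint A B) (hjB : j ∈ B) (hiS : i ∈ S) (hiA : i ∉ A)
    (hiB : i ∉ B),
    α (S \ {i}) j A
        (Finset.mem_sdiff.mpr ⟨hB hjB,
          Finset.notMem_singleton.mpr (fun h => hiB (by rw [← h]; exact hjB))⟩)
        (Finset.subset_sdiff.mpr ⟨hA, Finset.disjoint_singleton_right.mpr hiA⟩)
        (Finset.disjoint_right.mp hAB hjB) ∘ₗ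
      N.cast (sdiff_sdiff_comm' S A {i}) ∘ₗ
      α (S \ A) i B (Finset.mem_sdiff.mpr ⟨hiS, hiA⟩)
        (Finset.subset_sdiff.mpr ⟨hB, hAB.symm⟩) hiB =
    N.cast (sdiff_sdiff_comm' S {j} {i}) ∘ₗ
      α (S \ {j}) i ((A ∪ B) \ {j})
        (Finset.mem_sdiff.mpr ⟨hiS,
          Finset.notMem_singleton.mpr (fun h => hiB (by rw [h]; exact hjB))⟩)
        (Finset.sdiff_subset_sdiff (Finset.union_subset hA hB) (Finset.Subset.refl _))
        (by simp [hiA, hiB]) ∘ₗ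
      N.cast ((sdiff_sdiff_union' S A B).trans
        (mem_sdiff_erase' S (A ∪ B) j (Finset.mem_union_right A hjB)))

def CondCcAt (S A B : Finset ℕ) (j : ℕ) : Prop :=
  ∀ (hA : A ⊆ S) (hB : B ⊆ S) (hAB : Disjoint A B) (hjB : j ∈ B),
    α S j A (hB hjB) hA (Finset.disjoint_right.mp hAB hjB) ∘ₗ
      ω (S \ A) B (Finset.subset_sdiff.mpr ⟨hB, hAB.symm⟩) =
    ω (S \ {j}) ((A ∪ B) \ {j})
        (Finset.sdiff_subset_sdiff (Finset.union_subset hA hB) (Finset.Subset.refl _)) ∘ₗ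
      N.cast ((sdiff_sdiff_union' S A B).trans
        (mem_sdiff_erase' S (A ∪ B) j (Finset.mem_union_right A hjB)))

end Pointwise

section Glue

variable (α : ∀ (S : Finset ℕ) (i : ℕ) (A : Finset ℕ), i ∈ S → A ⊆ S → i ∉ A →
      (N.M (S \ A) →ₗ[k] N.M (S \ {i})))
    (ω : ∀ (T C : Finset ℕ), C ⊆ T → (N.M (T \ C) →ₗ[k] N.M T))

noncomputable def glue (S : Finset ℕ) (i : ℕ) (B : Finset ℕ) (hi : i ∈ S) (hB : B ⊆ S) :
    N.M (S \ B) →ₗ[k] N.M (S \ {i}) :=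
  if h : i ∈ B then
    ω (S \ {i}) (B \ {i}) (Finset.sdiff_subset_sdiff hB subset_rfl) ∘ₗ
      N.cast (mem_sdiff_erase' S B i h)
  else α S i B hi hB h

lemma glue_of_mem {S : Finset ℕ} {i : ℕ} {B : Finset ℕ} (hi : i ∈ S) (hB : B ⊆ S) (h : i ∈ B) :
    glue N α ω S i B hi hB =
      ω (S \ {i}) (B \ {i}) (Finset.sdiff_subset_sdiff hB subset_rfl) ∘ₗ
        N.cast (mem_sdiff_erase' S B i h) :=
  dif_pos h

lemma glue_of_notMem {S : Finset ℕ} {i : ℕ} {B : Finset ℕ} (hi : i ∈ S) (hB : B ⊆ S)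
    (h : i ∉ B) : glue N α ω S i B hi hB = α S i B hi hB h :=
  dif_neg h

end Glue

section Cases

/- In each case below the two sides are unfolded into words in `α`, `ω` and the canonical
identifications `N.cast`; the identifications are stripped off and the words compared letter by
letter (`alpha_heq`, `omega_heq`), which leaves identities between finite sets. -/

variable (α : ∀ (S : Finset ℕ) (i : ℕ) (A : Finset ℕ), i ∈ S → A ⊆ S → i ∉ A →
      (N.M (S \ A) →ₗ[k] N.M (S \ {i})))
    (ω : ∀ (T C : Finset ℕ), C ⊆ T → (N.M (T \ C) →ₗ[k] N.M T))
variable {S A B : Finset ℕ} (hA : A ⊆ S) (hB : B ⊆ S) (hd : Disjoint A B)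
  {j i : ℕ} (hj : j ∈ S) (hi : i ∈ S) (hji : j ≠ i)

lemma lhsCoeff_eq_rhsCoeff_iff_condA1At
    (hiA : i ∉ A) (hiB : i ∉ B) (hjA : j ∉ A) (hjB : j ∉ B) :
    lhsCoeff N (glue N α ω) S A B hA hB hd j i hj hi hji =
      rhsCoeff N (glue N α ω) S A B hA hB j i hj hi hji ↔
    CondA1At N α S j i A B := by
  simp only [lhsCoeff, rhsCoeff, dif_neg hiA, dif_neg hjB, sub_self, sub_eq_zero]
  simp (disch := grind [Finset.disjoint_left]) only [CondA1At, forall_prop_of_true]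
  refine N.linearMap_eq_iff_of_heq ?_ ?_ (fun x => ?_) (fun x => ?_)
  any_goals simp (disch := grind [Finset.disjoint_left]) only
    [vuCoeff, v'u'Coeff, LinearMap.comp_apply, glue_of_notMem]
  repeat' first
    | exact HEq.rfl
    | (rw [N.cast_apply_heq_iff]) | (rw [N.heq_cast_apply_iff])
    | apply alpha_heq | apply omega_heq
  all_goals ext; grind

lemma lhsCoeff_eq_rhsCoeff_iff_condBcAt_of_left_mem_right
    (hiA : i ∉ A) (hiB : i ∉ B) (hjB : j ∈ B) :
    lhsCoeff N (glue N α ω) S A B hA hB hd j i hj hi hji =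
      rhsCoeff N (glue N α ω) S A B hA hB j i hj hi hji ↔
    CondBcAt N α S A B j i := by
  simp only [lhsCoeff, rhsCoeff, dif_neg hiA, dif_pos hjB, sub_zero]
  simp (disch := grind [Finset.disjoint_left]) only [CondBcAt, forall_prop_of_true]
  refine N.linearMap_eq_iff_of_heq ?_ ?_ (fun x => ?_) (fun x => ?_)
  any_goals simp (disch := grind [Finset.disjoint_left]) only
    [vuCoeff, v'wCoeff, LinearMap.comp_apply, glue_of_notMem]
  repeat' first
    | exact HEq.rfl
    | (rw [N.cast_apply_heq_iff]) | (rw [N.heq_cast_apply_iff])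
    | apply alpha_heq | apply omega_heq
  all_goals ext; grind

lemma lhsCoeff_eq_rhsCoeff_iff_condBcAt_of_right_mem_left
    (hiA : i ∈ A) (hjA : j ∉ A) (hjB : j ∉ B) :
    lhsCoeff N (glue N α ω) S A B hA hB hd j i hj hi hji =
      rhsCoeff N (glue N α ω) S A B hA hB j i hj hi hji ↔
    CondBcAt N α S B A i j := by
  simp only [lhsCoeff, rhsCoeff, dif_pos hiA, dif_neg hjB, zero_sub, neg_inj]
  simp (disch := grind [Finset.disjoint_left]) only [CondBcAt, forall_prop_of_true]
  refine N.linearMap_eq_iff_of_heq ?_ ?_ (fun x => ?_) (fun x => ?_)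
  any_goals simp (disch := grind [Finset.disjoint_left]) only
    [v'u'Coeff, v'wCoeff, LinearMap.comp_apply, glue_of_notMem]
  repeat' first
    | exact HEq.rfl
    | (rw [N.cast_apply_heq_iff]) | (rw [N.heq_cast_apply_iff])
    | apply alpha_heq | apply omega_heq
  all_goals ext; grind

lemma lhsCoeff_eq_rhsCoeff_iff_condA2At_of_right_mem_right
    (hiA : i ∉ A) (hiB : i ∈ B) (hjA : j ∉ A) (hjB : j ∉ B) :
    lhsCoeff N (glue N α ω) S A B hA hB hd j i hj hi hji =
      rhsCoeff N (glue N α ω) S A B hA hB j i hj hi hji ↔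
    CondA2At N α ω (S \ {i}) j A (B \ {i}) := by
  simp only [lhsCoeff, rhsCoeff, dif_neg hiA, dif_neg hjB, sub_self, sub_eq_zero]
  simp (disch := grind [Finset.disjoint_left]) only [CondA2At, forall_prop_of_true]
  refine N.linearMap_eq_iff_of_heq ?_ ?_ (fun x => ?_) (fun x => ?_)
  any_goals simp (disch := grind [Finset.disjoint_left]) only
    [vuCoeff, v'u'Coeff, LinearMap.comp_apply, glue_of_mem, glue_of_notMem]
  repeat' first
    | exact HEq.rfl
    | (rw [N.cast_apply_heq_iff]) | (rw [N.heq_cast_apply_iff])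
    | apply alpha_heq | apply omega_heq
  all_goals ext; grind

lemma lhsCoeff_eq_rhsCoeff_iff_condA2At_of_left_mem_left
    (hiA : i ∉ A) (hiB : i ∉ B) (hjA : j ∈ A) (hjB : j ∉ B) :
    lhsCoeff N (glue N α ω) S A B hA hB hd j i hj hi hji =
      rhsCoeff N (glue N α ω) S A B hA hB j i hj hi hji ↔
    CondA2At N α ω (S \ {j}) i B (A \ {j}) := by
  simp only [lhsCoeff, rhsCoeff, dif_neg hiA, dif_neg hjB, sub_self, sub_eq_zero]
  simp (disch := grind [Finset.disjoint_left]) only [CondA2At, forall_prop_of_true]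
  refine eq_comm.trans ?_
  refine N.linearMap_eq_iff_of_heq ?_ ?_ (fun x => ?_) (fun x => ?_)
  any_goals simp (disch := grind [Finset.disjoint_left]) only
    [vuCoeff, v'u'Coeff, LinearMap.comp_apply, glue_of_mem, glue_of_notMem]
  repeat' first
    | exact HEq.rfl
    | (rw [N.cast_apply_heq_iff]) | (rw [N.heq_cast_apply_iff])
    | apply alpha_heq | apply omega_heq
  all_goals ext; grind

lemma lhsCoeff_eq_rhsCoeff_iff_condCcAt_of_mem_right
    (hiA : i ∉ A) (hiB : i ∈ B) (hjB : j ∈ B) :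
    lhsCoeff N (glue N α ω) S A B hA hB hd j i hj hi hji =
      rhsCoeff N (glue N α ω) S A B hA hB j i hj hi hji ↔
    CondCcAt N α ω (S \ {i}) A (B \ {i}) j := by
  simp only [lhsCoeff, rhsCoeff, dif_neg hiA, dif_pos hjB, sub_zero]
  simp (disch := grind [Finset.disjoint_left]) only [CondCcAt, forall_prop_of_true]
  refine N.linearMap_eq_iff_of_heq ?_ ?_ (fun x => ?_) (fun x => ?_)
  any_goals simp (disch := grind [Finset.disjoint_left]) only
    [vuCoeff, v'wCoeff, LinearMap.comp_apply, glue_of_mem, glue_of_notMem]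
  repeat' first
    | exact HEq.rfl
    | (rw [N.cast_apply_heq_iff]) | (rw [N.heq_cast_apply_iff])
    | apply alpha_heq | apply omega_heq
  all_goals ext; grind

lemma lhsCoeff_eq_rhsCoeff_iff_condCcAt_of_mem_left
    (hiA : i ∈ A) (hjA : j ∈ A) (hjB : j ∉ B) :
    lhsCoeff N (glue N α ω) S A B hA hB hd j i hj hi hji =
      rhsCoeff N (glue N α ω) S A B hA hB j i hj hi hji ↔
    CondCcAt N α ω (S \ {j}) B (A \ {j}) i := by
  simp only [lhsCoeff, rhsCoeff, dif_pos hiA, dif_neg hjB, zero_sub, neg_inj]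
  simp (disch := grind [Finset.disjoint_left]) only [CondCcAt, forall_prop_of_true]
  refine N.linearMap_eq_iff_of_heq ?_ ?_ (fun x => ?_) (fun x => ?_)
  any_goals simp (disch := grind [Finset.disjoint_left]) only
    [v'u'Coeff, v'wCoeff, LinearMap.comp_apply, glue_of_mem, glue_of_notMem]
  repeat' first
    | exact HEq.rfl
    | (rw [N.cast_apply_heq_iff]) | (rw [N.heq_cast_apply_iff])
    | apply alpha_heq | apply omega_heq
  all_goals ext; grind

lemma lhsCoeff_eq_rhsCoeff_iff_condA3At
    (hiA : i ∉ A) (hiB : i ∈ B) (hjA : j ∈ A) (hjB : j ∉ B) :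
    lhsCoeff N (glue N α ω) S A B hA hB hd j i hj hi hji =
      rhsCoeff N (glue N α ω) S A B hA hB j i hj hi hji ↔
    CondA3At N ω ((S \ {i}) \ {j}) (A \ {j}) (B \ {i}) := by
  simp only [lhsCoeff, rhsCoeff, dif_neg hiA, dif_neg hjB, sub_self, sub_eq_zero]
  simp (disch := grind [Finset.disjoint_left]) only [CondA3At, forall_prop_of_true]
  refine N.linearMap_eq_iff_of_heq ?_ ?_ (fun x => ?_) (fun x => ?_)
  any_goals simp (disch := grind [Finset.disjoint_left]) only
    [vuCoeff, v'u'Coeff, LinearMap.comp_apply, glue_of_mem]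
  repeat' first
    | exact HEq.rfl
    | (rw [N.cast_apply_heq_iff]) | (rw [N.heq_cast_apply_iff])
    | apply alpha_heq | apply omega_heq
  all_goals ext; grind

lemma lhsCoeff_eq_rhsCoeff_of_mem_left_of_mem_right (hiA : i ∈ A) (hjB : j ∈ B) :
    lhsCoeff N (glue N α ω) S A B hA hB hd j i hj hi hji =
      rhsCoeff N (glue N α ω) S A B hA hB j i hj hi hji := by
  simp only [lhsCoeff, rhsCoeff, dif_pos hiA, dif_pos hjB, sub_self, eq_comm (a := (0 : _ →ₗ[k] _)),
    sub_eq_zero]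
  refine LinearMap.ext fun x => eq_of_heq ?_
  simp (disch := grind [Finset.disjoint_left]) only [v'wCoeff, LinearMap.comp_apply, glue_of_mem]
  repeat' first
    | exact HEq.rfl
    | (rw [N.cast_apply_heq_iff]) | (rw [N.heq_cast_apply_iff])
    | apply alpha_heq | apply omega_heq
  all_goals ext; grind

end Cases

section Characterization

variable (α : ∀ (S : Finset ℕ) (i : ℕ) (A : Finset ℕ), i ∈ S → A ⊆ S → i ∉ A →
      (N.M (S \ A) →ₗ[k] N.M (S \ {i})))
    (ω : ∀ (T C : Finset ℕ), C ⊆ T → (N.M (T \ C) →ₗ[k] N.M T))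

lemma condA1_of_coeffsAgree (h : CoeffsAgree N (glue N α ω)) : CondA1 N α :=
  fun S i kk A C hi hk hik hA hC hAC hiA hiC hkA hkC =>
    (lhsCoeff_eq_rhsCoeff_iff_condA1At N α ω hA hC hAC hi hk hik hkA hkC hiA hiC).mp
      (h S A C hA hC hAC i kk hi hk hik) hi hk hik hA hC hAC hiA hiC hkA hkC

lemma condBc_of_coeffsAgree (h : CoeffsAgree N (glue N α ω)) : CondBc N α := by
  intro S A B j i hA hB hAB hjB hiS hiA hiB
  have hji : j ≠ i := by grind
  exact (lhsCoeff_eq_rhsCoeff_iff_condBcAt_of_left_mem_right N α ω hA hB hAB (hB hjB) hiS hji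
    hiA hiB hjB).mp (h S A B hA hB hAB j i (hB hjB) hiS hji) hA hB hAB hjB hiS hiA hiB

lemma condA2_of_coeffsAgree (h : CoeffsAgree N (glue N α ω)) : CondA2 N α ω := by
  intro S i A C hi hA hC hAC hiA hiC
  -- `ω` enters the identity only through `φ^T_{n,B}` with `n ∈ B`: adjoin a new point `n` to `S`.
  obtain ⟨n, hn⟩ := Infinite.exists_notMem_finset S
  have hA' : A ⊆ insert n S := hA.trans (Finset.subset_insert n S)
  have hC' : insert n C ⊆ insert n S := Finset.insert_subset_insert n hC
  have hd : Disjoint A (insert n C) := by grind [Finset.disjoint_left]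
  have hin : i ≠ n := by grind
  have key := (lhsCoeff_eq_rhsCoeff_iff_condA2At_of_right_mem_right N α ω hA' hC' hd
    (Finset.mem_insert_of_mem hi) (Finset.mem_insert_self n S) hin (by grind)
    (Finset.mem_insert_self n C) hiA (by grind)).mp
    (h _ _ _ hA' hC' hd _ _ (Finset.mem_insert_of_mem hi) (Finset.mem_insert_self n S) hin)
  rw [show insert n S \ {n} = S by grind, show insert n C \ {n} = C by grind] at key
  exact key hi hA hC hAC hiA hiC

lemma condCc_of_coeffsAgree (h : CoeffsAgree N (glue N α ω)) : CondCc N α ω := by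
  intro S A B j hA hB hAB hjB
  obtain ⟨n, hn⟩ := Infinite.exists_notMem_finset S
  have hA' : A ⊆ insert n S := hA.trans (Finset.subset_insert n S)
  have hB' : insert n B ⊆ insert n S := Finset.insert_subset_insert n hB
  have hd : Disjoint A (insert n B) := by grind [Finset.disjoint_left]
  have hjn : j ≠ n := by grind
  have key := (lhsCoeff_eq_rhsCoeff_iff_condCcAt_of_mem_right N α ω hA' hB' hd
    (Finset.mem_insert_of_mem (hB hjB)) (Finset.mem_insert_self n S) hjn (by grind)
    (Finset.mem_insert_self n B) (Finset.mem_insert_of_mem hjB)).mp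
    (h _ _ _ hA' hB' hd _ _ (Finset.mem_insert_of_mem (hB hjB)) (Finset.mem_insert_self n S) hjn)
  rw [show insert n S \ {n} = S by grind, show insert n B \ {n} = B by grind] at key
  exact key hA hB hAB hjB

lemma condA3_of_coeffsAgree (h : CoeffsAgree N (glue N α ω)) : CondA3 N ω := by
  intro T C D hC hD hCD
  obtain ⟨n, hn⟩ := Infinite.exists_notMem_finset T
  obtain ⟨m, hm⟩ := Infinite.exists_notMem_finset (insert n T)
  have hC' : insert m C ⊆ insert n (insert m T) := by grind
  have hD' : insert n D ⊆ insert n (insert m T) := by grind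
  have hd : Disjoint (insert m C) (insert n D) := by grind [Finset.disjoint_left]
  have hmn : m ≠ n := by grind
  have key := (lhsCoeff_eq_rhsCoeff_iff_condA3At N α ω hC' hD' hd (by grind) (by grind) hmn
    (by grind) (by grind) (by grind) (by grind)).mp
    (h _ _ _ hC' hD' hd _ _ (by grind) (by grind) hmn)
  rw [show (insert n (insert m T) \ {n}) \ {m} = T by ext; grind,
    show insert m C \ {m} = C by grind, show insert n D \ {n} = D by grind] at key
  exact key hC hD hCD

lemma coeffsAgree_glue (hA1 : CondA1 N α) (hA2 : CondA2 N α ω) (hA3 : CondA3 N ω)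
    (hBc : CondBc N α) (hCc : CondCc N α ω) : CoeffsAgree N (glue N α ω) := by
  intro S A B hA hB hd j i hj hi hji
  by_cases hiA : i ∈ A <;> by_cases hjB : j ∈ B
  · exact lhsCoeff_eq_rhsCoeff_of_mem_left_of_mem_right N α ω hA hB hd hj hi hji hiA hjB
  · by_cases hjA : j ∈ A
    · exact (lhsCoeff_eq_rhsCoeff_iff_condCcAt_of_mem_left N α ω hA hB hd hj hi hji hiA hjA
        hjB).mpr (hCc _ _ _ _)
    · exact (lhsCoeff_eq_rhsCoeff_iff_condBcAt_of_right_mem_left N α ω hA hB hd hj hi hji hiA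
        hjA hjB).mpr (hBc _ _ _ _ _)
  · by_cases hiB : i ∈ B
    · exact (lhsCoeff_eq_rhsCoeff_iff_condCcAt_of_mem_right N α ω hA hB hd hj hi hji hiA hiB
        hjB).mpr (hCc _ _ _ _)
    · exact (lhsCoeff_eq_rhsCoeff_iff_condBcAt_of_left_mem_right N α ω hA hB hd hj hi hji hiA
        hiB hjB).mpr (hBc _ _ _ _ _)
  · by_cases hiB : i ∈ B <;> by_cases hjA : j ∈ A
    · exact (lhsCoeff_eq_rhsCoeff_iff_condA3At N α ω hA hB hd hj hi hji hiA hiB hjA hjB).mpr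
        (hA3 _ _ _)
    · exact (lhsCoeff_eq_rhsCoeff_iff_condA2At_of_right_mem_right N α ω hA hB hd hj hi hji hiA
        hiB hjA hjB).mpr (hA2 _ _ _ _)
    · exact (lhsCoeff_eq_rhsCoeff_iff_condA2At_of_left_mem_left N α ω hA hB hd hj hi hji hiA
        hiB hjA hjB).mpr (hA2 _ _ _ _)
    · exact (lhsCoeff_eq_rhsCoeff_iff_condA1At N α ω hA hB hd hj hi hji hiA hiB hjA hjB).mpr
        (hA1 _ _ _ _ _)

end Characterization

theorem statement16
    (α : ∀ (S : Finset ℕ) (i : ℕ) (A : Finset ℕ), i ∈ S → A ⊆ S → i ∉ A →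
      (N.M (S \ A) →ₗ[k] N.M (S \ {i})))
    (ω : ∀ (T C : Finset ℕ), C ⊆ T → (N.M (T \ C) →ₗ[k] N.M T))
    (φ : ∀ (S : Finset ℕ) (i : ℕ) (B : Finset ℕ), i ∈ S → B ⊆ S →
      (N.M (S \ B) →ₗ[k] N.M (S \ {i})))
    (hφoff : ∀ (S : Finset ℕ) (i : ℕ) (B : Finset ℕ) (hi : i ∈ S) (hB : B ⊆ S)
      (h : i ∉ B), φ S i B hi hB = α S i B hi hB h)
    (hφdiag : ∀ (S : Finset ℕ) (i : ℕ) (B : Finset ℕ) (hi : i ∈ S) (hB : B ⊆ S)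
      (h : i ∈ B),
      φ S i B hi hB =
        ω (S \ {i}) (B \ {i})
            (Finset.sdiff_subset_sdiff hB (Finset.Subset.refl _)) ∘ₗ
          N.cast (mem_sdiff_erase' S B i h)) :
    (∀ S : Finset ℕ,
      vMap N φ S ∘ₗ uMap N φ S - v'Map N φ S ∘ₗ u'Map N φ S =
        v'Map N φ S ∘ₗ wMap N S - σP N S ∘ₗ v'Map N φ S ∘ₗ wMap N S ∘ₗ σN N S) ↔
    (CondA1 N α ∧ CondA2 N α ω ∧ CondA3 N ω ∧ CondBc N α ∧ CondCc N α ω) := by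
  obtain rfl : φ = glue N α ω := by
    funext S i B hi hB
    by_cases h : i ∈ B
    · exact (hφdiag S i B hi hB h).trans (glue_of_mem N α ω hi hB h).symm
    · exact (hφoff S i B hi hB h).trans (glue_of_notMem N α ω hi hB h).symm
  rw [wittIdentity_iff_coeffsAgree]
  exact ⟨fun h => ⟨condA1_of_coeffsAgree N α ω h, condA2_of_coeffsAgree N α ω h,
    condA3_of_coeffsAgree N α ω h, condBc_of_coeffsAgree N α ω h, condCc_of_coeffsAgree N α ω h⟩,
    fun ⟨hA1, hA2, hA3, hBc, hCc⟩ => coeffsAgree_glue N α ω hA1 hA2 hA3 hBc hCc⟩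

end Stmt16
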